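/- Suppose 1 ≤ k < n are integers with k(k+1) ≤ n, and distance is measured in the operator norm. Then for every n×n density matrix X, d(X, D_{n,k}) ≤ d((1/n)·I_n, D_{n,k}) = 1/k − 1/n. If instead k(k+1) > n, then for every density matrix X, d(X, D_{n,k}) ≤ d((1/(k+1))·(I_{k+1} ⊕ O_{n−k−1}), D_{n,k}) = 1/(k+1). -/

import Mathlib

/-!
In the eigenbasis of `X` everything is diagonal. For the upper bound keep the `k` largest
eigenvalues of `X`, spread the discarded mass `t` evenly over them and drop the rest: the
error has eigenvalues `-t/k`, with `t/k ≤ 1/k - 1/n` because the top `k` eigenvalues carry at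
least the share `k/n` of the mass, and the discarded eigenvalues, each at most `1/(k+1)`. For
the lower bounds, a density matrix of rank at most `k` has an eigenvalue `≥ 1/k`, which is at
distance `≥ 1/k - 1/n` from `1/n`; and the kernel of such a matrix meets the `(k+1)`-dimensional
support of `(1/(k+1))(I_{k+1} ⊕ O)`, on which the difference acts as `1/(k+1)`. The two regimes
are separated by `1/(k+1) ≤ 1/k - 1/n ↔ k(k+1) ≤ n`.
-/

open Matrix BigOperators Finset
open scoped ComplexOrder

/-- The singular values of a square complex matrix. -/
noncomputable def singVals {n : ℕ} (A : Matrix (Fin n) (Fin n) ℂ) : Fin n → ℝ :=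
  fun i => Real.sqrt ((Matrix.isHermitian_conjTranspose_mul_self A).eigenvalues i)

/-- The trace norm: the sum of singular values. -/
noncomputable def traceNorm {n : ℕ} (A : Matrix (Fin n) (Fin n) ℂ) : ℝ :=
  ∑ i, singVals A i

/-- A density matrix: positive semidefinite with trace 1. -/
def IsDensity {n : ℕ} (X : Matrix (Fin n) (Fin n) ℂ) : Prop :=
  X.PosSemidef ∧ X.trace = 1

/-- Distance from `X` to the set of density matrices of rank at most `k`,
measured via a given norm `N`. -/
noncomputable def distToLowRank {n : ℕ} (N : Matrix (Fin n) (Fin n) ℂ → ℝ) (k : ℕ)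
    (X : Matrix (Fin n) (Fin n) ℂ) : ℝ :=
  sInf {t | ∃ Y : Matrix (Fin n) (Fin n) ℂ, IsDensity Y ∧ Y.rank ≤ k ∧ t = N (X - Y)}

/-- The operator norm: the largest singular value. -/
noncomputable def matOpNorm {n : ℕ} (A : Matrix (Fin n) (Fin n) ℂ) : ℝ :=
  ⨆ i, singVals A i

/-- The state `(1/m)·(I_m ⊕ O_{n−m})`. -/
noncomputable def stdState (n m : ℕ) : Matrix (Fin n) (Fin n) ℂ :=
  Matrix.diagonal (fun i => if (i : ℕ) < m then (1 / (m : ℂ)) else 0)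

open scoped Matrix.Norms.L2Operator

namespace Matrix

variable {𝕜 : Type*} [RCLike 𝕜] {ι : Type*} [Fintype ι] [DecidableEq ι]

lemma l2_opNorm_conjStarAlgAut (U : unitaryGroup ι 𝕜) (A : Matrix ι ι 𝕜) :
    ‖Unitary.conjStarAlgAut 𝕜 _ U A‖ = ‖A‖ := by
  rw [Unitary.conjStarAlgAut_apply, ← Unitary.coe_star, CStarRing.norm_mul_coe_unitary,
    CStarRing.norm_coe_unitary_mul]

lemma rank_conjStarAlgAut (U : unitaryGroup ι 𝕜) (A : Matrix ι ι 𝕜) :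
    (Unitary.conjStarAlgAut 𝕜 _ U A).rank = A.rank := by
  simp [-isUnit_iff_ne_zero, -Unitary.coe_star, ← Unitary.coe_star]

lemma IsHermitian.l2_opNorm_eq {A : Matrix ι ι 𝕜} (hA : A.IsHermitian) :
    ‖A‖ = ‖(RCLike.ofReal ∘ hA.eigenvalues : ι → 𝕜)‖ := by
  conv_lhs => rw [hA.spectral_theorem]
  rw [l2_opNorm_conjStarAlgAut, l2_opNorm_diagonal]

lemma norm_le_l2_opNorm_of_mulVec_eq_smul {A : Matrix ι ι 𝕜} {v : ι → 𝕜} {μ : 𝕜} (hv : v ≠ 0)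
    (h : A *ᵥ v = μ • v) : ‖μ‖ ≤ ‖A‖ := by
  have hv' : 0 < ‖WithLp.toLp 2 v‖ := norm_pos_iff.mpr (by simpa using hv)
  have := A.l2_opNorm_mulVec (WithLp.toLp 2 v)
  rw [h, map_smul, norm_smul] at this
  exact le_of_mul_le_mul_right this hv'

lemma exists_mem_range_ne_zero_mulVec_eq_zero {K : Type*} [Field K]
    {l m n : Type*} [Fintype m] [Fintype n] {A : Matrix m n K} {B : Matrix l m K}
    (h : B.rank < A.rank) :
    ∃ v ∈ LinearMap.range A.mulVecLin, v ≠ 0 ∧ B *ᵥ v = 0 := by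
  set f := B.mulVecLin.domRestrict (LinearMap.range A.mulVecLin)
  have hrange : Module.finrank K (LinearMap.range f) ≤ B.rank :=
    Submodule.finrank_mono (LinearMap.range_domRestrict_le_range _ _)
  have hsum := f.finrank_range_add_finrank_ker
  have hker : 1 ≤ Module.finrank K (LinearMap.ker f) := by
    unfold Matrix.rank at h hrange
    omega
  obtain ⟨⟨v, hv⟩, hvf, hne⟩ :=
    Submodule.exists_mem_ne_zero_of_ne_bot (Submodule.one_le_finrank_iff.mp hker)
  exact ⟨v, hv, by simpa using hne, hvf⟩

end Matrix

lemma matOpNorm_eq_l2_opNorm {n : ℕ} (A : Matrix (Fin n) (Fin n) ℂ) : matOpNorm A = ‖A‖ := by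
  have hB := isHermitian_conjTranspose_mul_self A
  have hsq : ‖A‖ ^ 2 = ‖(RCLike.ofReal ∘ hB.eigenvalues : Fin n → ℂ)‖ := by
    rw [sq, ← l2_opNorm_conjTranspose_mul_self, hB.l2_opNorm_eq]
  have heig (i : Fin n) : ‖(RCLike.ofReal (hB.eigenvalues i) : ℂ)‖ = hB.eigenvalues i := by
    simp [eigenvalues_conjTranspose_mul_self_nonneg A i]
  apply le_antisymm
  · refine Real.iSup_le (fun i => ?_) (norm_nonneg A)
    rw [singVals, Real.sqrt_le_iff]
    exact ⟨norm_nonneg A,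
      hsq ▸ heig i ▸ norm_le_pi_norm (RCLike.ofReal ∘ hB.eigenvalues : Fin n → ℂ) i⟩
  · have hM : 0 ≤ matOpNorm A := Real.iSup_nonneg fun i => Real.sqrt_nonneg _
    refine (pow_le_pow_iff_left₀ (norm_nonneg A) hM two_ne_zero).mp ?_
    rw [hsq, pi_norm_le_iff_of_nonneg (sq_nonneg _)]
    intro i
    rw [Function.comp_apply, heig, ← Real.sqrt_le_left hM]
    exact le_ciSup (f := singVals A) (Set.finite_range _).bddAbove i

section distToLowRank

variable {n k : ℕ} {N : Matrix (Fin n) (Fin n) ℂ → ℝ} {X : Matrix (Fin n) (Fin n) ℂ} {c : ℝ}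

lemma distToLowRank_le (hN : ∀ A, 0 ≤ N A) {Y : Matrix (Fin n) (Fin n) ℂ} (hY : IsDensity Y)
    (hr : Y.rank ≤ k) (hc : N (X - Y) ≤ c) : distToLowRank N k X ≤ c :=
  csInf_le_of_le ⟨0, by rintro t ⟨Y, -, -, rfl⟩; exact hN _⟩ ⟨Y, hY, hr, rfl⟩ hc

lemma le_distToLowRank {Y₀ : Matrix (Fin n) (Fin n) ℂ} (hY₀ : IsDensity Y₀) (hr₀ : Y₀.rank ≤ k)
    (h : ∀ Y, IsDensity Y → Y.rank ≤ k → c ≤ N (X - Y)) : c ≤ distToLowRank N k X :=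
  le_csInf ⟨_, Y₀, hY₀, hr₀, rfl⟩ (by rintro t ⟨Y, hY, hr, rfl⟩; exact h Y hY hr)

end distToLowRank

lemma IsDensity.sum_eigenvalues {n : ℕ} {X : Matrix (Fin n) (Fin n) ℂ} (hX : IsDensity X) :
    ∑ i, hX.1.1.eigenvalues i = 1 := by
  have h := hX.1.1.trace_eq_sum_eigenvalues.symm.trans hX.2
  exact Complex.ofReal_eq_one.mp (by push_cast; exact h)

section stdState

variable {n m : ℕ}

lemma card_filter_val_lt_of_le (hmn : m ≤ n) : #{i : Fin n | (i : ℕ) < m} = m := by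
  rw [Fin.card_filter_val_lt, min_eq_right hmn]

lemma stdState_isDensity (hm : 1 ≤ m) (hmn : m ≤ n) : IsDensity (stdState n m) := by
  refine ⟨posSemidef_diagonal_iff.mpr fun i => ?_, ?_⟩
  · split_ifs
    · simp
    · rfl
  · rw [stdState, trace_diagonal, ← sum_filter, sum_const, card_filter_val_lt_of_le hmn]
    simp [show (m : ℂ) ≠ 0 by exact_mod_cast (by omega : m ≠ 0)]

lemma rank_stdState (hmn : m ≤ n) : (stdState n m).rank = m := by
  rw [stdState, rank_diagonal, Fintype.card_subtype]
  refine (congrArg card (filter_congr fun i _ => ?_)).trans (card_filter_val_lt_of_le hmn)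
  by_cases h : (i : ℕ) < m
  · simp [h, (Nat.zero_lt_of_lt h).ne']
  · simp [h]

lemma stdState_mul_self : stdState n m * stdState n m = (1 / m : ℂ) • stdState n m := by
  rw [stdState, diagonal_mul_diagonal, ← diagonal_smul]
  congr 1
  ext i
  by_cases h : (i : ℕ) < m <;> simp [h]

lemma stdState_self_mulVec (v : Fin n → ℂ) : stdState n n *ᵥ v = (1 / n : ℂ) • v := by
  ext i
  simp [stdState, mulVec_diagonal]

end stdState

section SparseApprox

variable {ι : Type*} [Fintype ι]

lemma exists_inv_le_of_sum_eq_one {f : ι → ℝ} (hf : ∑ i, f i = 1)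
    {k : ℕ} (hk : #{i | f i ≠ 0} ≤ k) : ∃ i, 1 / (k : ℝ) ≤ f i := by
  have hs : ∑ i ∈ {i | f i ≠ 0}, f i = 1 := by rw [sum_filter_ne_zero, hf]
  obtain ⟨i, -, hi⟩ := exists_le_of_sum_le (f := fun _ => 1 / (k : ℝ)) (g := f)
    (nonempty_of_sum_ne_zero (hs ▸ one_ne_zero)) (by
      rw [sum_const, nsmul_eq_mul, mul_one_div, hs]
      exact div_le_one_of_le₀ (by exact_mod_cast hk) k.cast_nonneg)
  exact ⟨i, hi⟩

variable [DecidableEq ι]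

lemma exists_card_eq_forall_notMem_le {α : Type*} [LinearOrder α] (f : ι → α) {k : ℕ}
    (hk : k ≤ Fintype.card ι) : ∃ S : Finset ι, #S = k ∧ ∀ i ∈ S, ∀ j ∉ S, f j ≤ f i := by
  induction k with
  | zero => exact ⟨∅, card_empty, by simp⟩
  | succ k ih =>
    obtain ⟨S, hS, hSf⟩ := ih (by omega)
    obtain ⟨j₀, hj₀, hj₀max⟩ := exists_max_image Sᶜ f (by rw [← card_pos, card_compl]; omega)
    refine ⟨insert j₀ S, by rw [card_insert_of_notMem (mem_compl.mp hj₀), hS], ?_⟩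
    intro i hi j hj
    rw [mem_insert, not_or] at hj
    rcases mem_insert.mp hi with rfl | hi
    · exact hj₀max j (mem_compl.mpr hj.2)
    · exact hSf i hi j hj.2

lemma card_mul_sum_compl_le {f : ι → ℝ} {S : Finset ι} (hS : ∀ i ∈ S, ∀ j ∉ S, f j ≤ f i) :
    #S * ∑ j ∈ Sᶜ, f j ≤ #Sᶜ * ∑ i ∈ S, f i :=
  calc (#S : ℝ) * ∑ j ∈ Sᶜ, f j = ∑ _i ∈ S, ∑ j ∈ Sᶜ, f j := by rw [sum_const, nsmul_eq_mul]
    _ ≤ ∑ i ∈ S, ∑ _j ∈ Sᶜ, f i :=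
      sum_le_sum fun i hi => sum_le_sum fun j hj => hS i hi j (mem_compl.mp hj)
    _ = #Sᶜ * ∑ i ∈ S, f i := by simp only [sum_const, nsmul_eq_mul, mul_sum]

lemma card_le_card_mul_sum_of_forall_le {p : ι → ℝ} (hp₁ : ∑ i, p i = 1) {S : Finset ι}
    (hS : ∀ i ∈ S, ∀ j ∉ S, p j ≤ p i) : (#S : ℝ) ≤ Fintype.card ι * ∑ i ∈ S, p i := by
  have h := card_mul_sum_compl_le hS
  rw [show ∑ j ∈ Sᶜ, p j = 1 - ∑ i ∈ S, p i by linarith [sum_add_sum_compl S p], card_compl,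
    Nat.cast_sub (card_le_univ S)] at h
  nlinarith

lemma add_one_mul_le_one_of_notMem {p : ι → ℝ} (hp₀ : ∀ i, 0 ≤ p i) (hp₁ : ∑ i, p i = 1)
    {S : Finset ι} (hS : ∀ i ∈ S, ∀ j ∉ S, p j ≤ p i) {j : ι} (hj : j ∉ S) :
    (#S + 1) * p j ≤ 1 := by
  have hS_ge : #S * p j ≤ ∑ i ∈ S, p i := by
    simpa using card_nsmul_le_sum S p (p j) fun i hi => hS i hi j hj
  have hinsert : ∑ i ∈ S, p i + p j ≤ 1 := by
    rw [← hp₁, add_comm, ← sum_insert hj]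
    exact sum_le_univ_sum_of_nonneg hp₀
  linarith

lemma exists_sparse_approx {p : ι → ℝ} (hp₀ : ∀ i, 0 ≤ p i) (hp₁ : ∑ i, p i = 1) {k : ℕ}
    (hk : 1 ≤ k) (hkn : k ≤ Fintype.card ι) :
    ∃ q : ι → ℝ, (∀ i, 0 ≤ q i) ∧ ∑ i, q i = 1 ∧ #{i | q i ≠ 0} ≤ k ∧
      ∀ i, |p i - q i| ≤ max (1 / (k : ℝ) - 1 / Fintype.card ι) (1 / ((k : ℝ) + 1)) := by
  obtain ⟨S, rfl, hSp⟩ := exists_card_eq_forall_notMem_le p hkn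
  set t := ∑ j ∈ Sᶜ, p j
  have hsplit : ∑ i ∈ S, p i + t = 1 := (sum_add_sum_compl S p).trans hp₁
  have hk₀ : (0 : ℝ) < #S := by exact_mod_cast hk
  have hn₀ : (0 : ℝ) < Fintype.card ι := by exact_mod_cast (by omega : 0 < Fintype.card ι)
  have hspread : 0 ≤ t / #S := div_nonneg (sum_nonneg fun j _ => hp₀ j) hk₀.le
  have spread_le : t / #S ≤ 1 / #S - 1 / Fintype.card ι := by
    have hhead := card_le_card_mul_sum_of_forall_le hp₁ hSp
    have : 1 / (Fintype.card ι : ℝ) ≤ (∑ i ∈ S, p i) / #S := by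
      rw [div_le_div_iff₀ hn₀ hk₀]
      linarith
    rw [show t = 1 - ∑ i ∈ S, p i by linarith, sub_div]
    linarith
  have tail_le (j : ι) (hj : j ∉ S) : p j ≤ 1 / (#S + 1) := by
    rw [le_div_iff₀ (by positivity), mul_comm]
    exact add_one_mul_le_one_of_notMem hp₀ hp₁ hSp hj
  refine ⟨fun i => if i ∈ S then p i + t / #S else 0, fun i => ?_, ?_, ?_, fun i => ?_⟩
  · dsimp only
    split_ifs
    · exact add_nonneg (hp₀ i) hspread
    · exact le_rfl
  · rw [sum_ite_mem, univ_inter, sum_add_distrib, sum_const, nsmul_eq_mul,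
      mul_div_cancel₀ _ hk₀.ne', hsplit]
  · refine card_le_card fun i hi => ?_
    by_contra hiS
    simp [hiS] at hi
  · dsimp only
    split_ifs with hi
    · rw [sub_add_cancel_left, abs_neg, abs_of_nonneg hspread]
      exact spread_le.trans (le_max_left _ _)
    · rw [sub_zero, abs_of_nonneg (hp₀ i)]
      exact (tail_le i hi).trans (le_max_right _ _)

end SparseApprox

lemma isDensity_conjStarAlgAut_diagonal {n : ℕ} (U : unitaryGroup (Fin n) ℂ) {q : Fin n → ℝ}
    (hq₀ : ∀ i, 0 ≤ q i) (hq₁ : ∑ i, q i = 1) :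
    IsDensity (Unitary.conjStarAlgAut ℂ _ U (diagonal (RCLike.ofReal ∘ q))) := by
  rw [Unitary.conjStarAlgAut_apply]
  refine ⟨?_, ?_⟩
  · rw [star_eq_conjTranspose]
    exact (posSemidef_diagonal_iff.mpr fun i =>
      Complex.zero_le_real.mpr (hq₀ i)).mul_mul_conjTranspose_same _
  · rw [trace_mul_cycle, Unitary.coe_star_mul_self, one_mul, trace_diagonal]
    simp only [Function.comp_apply, ← map_sum, hq₁, map_one]

lemma exists_isDensity_rank_le_norm_sub_le {n k : ℕ} {X : Matrix (Fin n) (Fin n) ℂ}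
    (hX : IsDensity X) (hk : 1 ≤ k) (hkn : k ≤ n) :
    ∃ Y, IsDensity Y ∧ Y.rank ≤ k ∧ ‖X - Y‖ ≤ max (1 / (k : ℝ) - 1 / n) (1 / ((k : ℝ) + 1)) := by
  obtain ⟨q, hq₀, hq₁, hqk, hpq⟩ := exists_sparse_approx hX.1.eigenvalues_nonneg
    hX.sum_eigenvalues hk (by simpa using hkn)
  set U := hX.1.1.eigenvectorUnitary
  refine ⟨Unitary.conjStarAlgAut ℂ _ U (diagonal (RCLike.ofReal ∘ q)),
    isDensity_conjStarAlgAut_diagonal U hq₀ hq₁, ?_, ?_⟩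
  · rw [rank_conjStarAlgAut, rank_diagonal, Fintype.card_subtype]
    simpa using hqk
  · have hXY : X - Unitary.conjStarAlgAut ℂ _ U (diagonal (RCLike.ofReal ∘ q)) =
        Unitary.conjStarAlgAut ℂ _ U (diagonal (RCLike.ofReal ∘ (hX.1.1.eigenvalues - q))) := by
      have hsplit : (RCLike.ofReal ∘ hX.1.1.eigenvalues : Fin n → ℂ) =
          fun i => (RCLike.ofReal ∘ (hX.1.1.eigenvalues - q)) i + (RCLike.ofReal ∘ q) i := by
        ext i
        simp
      rw [sub_eq_iff_eq_add, ← map_add, diagonal_add, ← hsplit]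
      exact hX.1.1.spectral_theorem
    rw [hXY, l2_opNorm_conjStarAlgAut, l2_opNorm_diagonal,
      pi_norm_le_iff_of_nonneg ((one_div_nonneg.mpr (by positivity)).trans (le_max_right _ _))]
    intro i
    rw [Function.comp_apply, RCLike.norm_ofReal, Pi.sub_apply]
    simpa only [Fintype.card_fin] using hpq i

lemma inv_sub_inv_le_norm_stdState_sub {n k : ℕ} {Y : Matrix (Fin n) (Fin n) ℂ}
    (hY : IsDensity Y) (hr : Y.rank ≤ k) : 1 / (k : ℝ) - 1 / n ≤ ‖stdState n n - Y‖ := by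
  have hH := hY.1.1
  obtain ⟨i, hi⟩ := exists_inv_le_of_sum_eq_one (k := k) hY.sum_eigenvalues
    (by rwa [← Fintype.card_subtype, ← hH.rank_eq_card_non_zero_eigs])
  have hv : ⇑(hH.eigenvectorBasis i) ≠ 0 :=
    (WithLp.ofLp_eq_zero 2).ne.2 (hH.eigenvectorBasis.orthonormal.ne_zero i)
  have heig : (stdState n n - Y) *ᵥ ⇑(hH.eigenvectorBasis i) =
      ((1 / n - hH.eigenvalues i : ℝ) : ℂ) • ⇑(hH.eigenvectorBasis i) := by
    rw [sub_mulVec, stdState_self_mulVec, hH.mulVec_eigenvectorBasis,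
      RCLike.real_smul_eq_coe_smul (K := ℂ)]
    push_cast
    rw [sub_smul]
    rfl
  have h := norm_le_l2_opNorm_of_mulVec_eq_smul hv heig
  rw [Complex.norm_real, Real.norm_eq_abs] at h
  linarith [neg_abs_le (1 / (n : ℝ) - hH.eigenvalues i)]

lemma inv_le_norm_stdState_sub {n m : ℕ} {Y : Matrix (Fin n) (Fin n) ℂ} (hmn : m ≤ n)
    (hr : Y.rank < m) : 1 / (m : ℝ) ≤ ‖stdState n m - Y‖ := by
  obtain ⟨v, ⟨w, rfl⟩, hv, hYv⟩ :=
    exists_mem_range_ne_zero_mulVec_eq_zero (A := stdState n m) (B := Y)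
      (by rwa [rank_stdState hmn])
  have heig : (stdState n m - Y) *ᵥ (stdState n m).mulVecLin w =
      (1 / m : ℂ) • (stdState n m).mulVecLin w := by
    rw [sub_mulVec, hYv, sub_zero, mulVecLin_apply, mulVec_mulVec, stdState_mul_self,
      smul_mulVec]
  simpa using norm_le_l2_opNorm_of_mulVec_eq_smul hv heig

theorem stmt_19 (n k : ℕ) (hk1 : 1 ≤ k) (hkn : k < n) :
    (k * (k + 1) ≤ n →
      ∀ X : Matrix (Fin n) (Fin n) ℂ, IsDensity X →
        distToLowRank matOpNorm k X ≤ distToLowRank matOpNorm k (stdState n n) ∧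
          distToLowRank matOpNorm k (stdState n n) = 1 / (k : ℝ) - 1 / (n : ℝ)) ∧
    (n < k * (k + 1) →
      ∀ X : Matrix (Fin n) (Fin n) ℂ, IsDensity X →
        distToLowRank matOpNorm k X ≤ distToLowRank matOpNorm k (stdState n (k + 1)) ∧
          distToLowRank matOpNorm k (stdState n (k + 1)) = 1 / ((k : ℝ) + 1)) := by
  rw [show (matOpNorm : Matrix (Fin n) (Fin n) ℂ → ℝ) = (‖·‖) from funext matOpNorm_eq_l2_opNorm]
  set c := max (1 / (k : ℝ) - 1 / n) (1 / ((k : ℝ) + 1))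
  have upper (X : Matrix (Fin n) (Fin n) ℂ) (hX : IsDensity X) : distToLowRank (‖·‖) k X ≤ c :=
    have ⟨Y, hY, hr, hXY⟩ := exists_isDensity_rank_le_norm_sub_le hX hk1 hkn.le
    distToLowRank_le (fun _ => norm_nonneg _) hY hr hXY
  have dist_stdState {m : ℕ} (hm : 1 ≤ m) (hmn : m ≤ n)
      (hlow : ∀ Y, IsDensity Y → Y.rank ≤ k → c ≤ ‖stdState n m - Y‖) :
      distToLowRank (‖·‖) k (stdState n m) = c := by
    have hS := stdState_isDensity hm hmn
    obtain ⟨Y₀, hY₀, hr₀, -⟩ := exists_isDensity_rank_le_norm_sub_le hS hk1 hkn.le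
    exact le_antisymm (upper _ hS) (le_distToLowRank hY₀ hr₀ hlow)
  have hkR : (0 : ℝ) < k := by exact_mod_cast hk1
  have hnR : (0 : ℝ) < n := by exact_mod_cast (by omega : 0 < n)
  have hcmp : 1 / ((k : ℝ) + 1) ≤ 1 / k - 1 / n ↔ (k * (k + 1) : ℝ) ≤ n := by
    rw [div_sub_div _ _ hkR.ne' hnR.ne', div_le_div_iff₀ (by positivity) (by positivity)]
    constructor <;> intro h <;> nlinarith
  constructor
  · intro hcase
    have hc : c = 1 / k - 1 / n := max_eq_left (hcmp.mpr (by exact_mod_cast hcase))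
    have h := dist_stdState (by omega) le_rfl fun Y hY hr =>
      hc ▸ inv_sub_inv_le_norm_stdState_sub hY hr
    exact fun X hX => ⟨(upper X hX).trans h.ge, h.trans hc⟩
  · intro hcase
    have hlt : (n : ℝ) < k * (k + 1) := by exact_mod_cast hcase
    have hc : c = 1 / ((k : ℝ) + 1) := max_eq_right (not_le.mp (mt hcmp.mp hlt.not_ge)).le
    have h := dist_stdState (by omega) hkn fun Y _ hr => by
      have h := inv_le_norm_stdState_sub (m := k + 1) hkn (Nat.lt_add_one_of_le hr)
      rw [hc]
      push_cast at h
      exact h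
    exact fun X hX => ⟨(upper X hX).trans h.ge, h.trans hc⟩
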